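/- arXiv:1212.6151 — 7 statements merged into one kernel-verified Lean document; each statement's English description precedes it below -/
import Mathlib

section
/- For all z, z' in the hyperbolic upper half-plane ℍ, one has |dist(z, z') − (2·log M(z,z') − log(Im z) − log(Im z'))| ≤ log 4. -/
/-!
Both sides are controlled by `S = (Re z - Re z')² + (Im z)² + (Im z')²`: on the one hand
`cosh (dist z z') = S / (2 Im z Im z')` and `e^d / 2 ≤ cosh d ≤ e^d`; on the other hand
`S / 4 ≤ M(z,z')² ≤ 2 S`. For the latter, both points lie on the circle `|ζ - c| = R`, so with
`a = Re z - c`, `b = Re z' - c` one has `a² + (Im z)² = b² + (Im z')² = R²`. If the top of the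
arc lies between the points (`a b < 0`), then `S = 2R² - 2ab ∈ [2R², 4R²]`; otherwise `a`, `b`
have the same sign and `(a - b)² ≤ |a² - b²| = |(Im z')² - (Im z)²| ≤ max (Im z, Im z')²`.
-/

open UpperHalfPlane

/-- The maximal height of the hyperbolic geodesic segment joining `z` and `z'` in the
upper half-plane, defined explicitly: if `Re z = Re z'` it is `max (Im z) (Im z')`;
otherwise, with `c` the centre on `ℝ` of the circle through `z, z'` orthogonal to `ℝ`
and `R` its radius, it is `R` when the top of the circle lies strictly between the two
points (i.e. `(Re z - c) * (Re z' - c) < 0`), and `max (Im z) (Im z')` otherwise. -/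
noncomputable def maxHeight (z z' : UpperHalfPlane) : ℝ :=
  if z.re = z'.re then max z.im z'.im
  else
    let c : ℝ := (‖(z : ℂ)‖ ^ 2 - ‖(z' : ℂ)‖ ^ 2) /
      (2 * (z.re - z'.re))
    let R : ℝ := ‖(z : ℂ) - (c : ℂ)‖
    if (z.re - c) * (z'.re - c) < 0 then R else max z.im z'.im

namespace Real

theorem abs_sub_log_le_log_of_exp_le_mul {d q k : ℝ} (hq : 0 < q) (hexp : exp d ≤ k * q)
    (hq_le : q ≤ k * exp d) : |d - log q| ≤ log k := by
  have hk : 0 < k := pos_of_mul_pos_left (hq.trans_le hq_le) (exp_pos d).le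
  have h₁ := log_le_log (exp_pos d) hexp
  have h₂ := log_le_log hq hq_le
  rw [log_exp, log_mul hk.ne' hq.ne'] at h₁
  rw [log_mul hk.ne' (exp_pos d).ne', log_exp] at h₂
  exact abs_le.mpr ⟨by linarith, by linarith⟩

theorem exp_le_two_mul_cosh (x : ℝ) : exp x ≤ 2 * cosh x := by
  linarith [cosh_add_sinh x, sinh_lt_cosh x]

theorem cosh_le_exp {x : ℝ} (hx : 0 ≤ x) : cosh x ≤ exp x := by
  linarith [cosh_add_sinh x, sinh_nonneg_iff.mpr hx]

end Real

section HeightBounds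

variable {a b y y' : ℝ}

theorem sub_sq_le_abs_sq_sub_sq_of_mul_nonneg (hab : 0 ≤ a * b) :
    (a - b) ^ 2 ≤ |a ^ 2 - b ^ 2| := by
  rcases abs_cases (a ^ 2 - b ^ 2) with ⟨h, hsign⟩ | ⟨h, hsign⟩ <;> rw [h] <;>
    nlinarith [sq_nonneg (a - b), sq_nonneg (a + b), sq_nonneg (a * b - a ^ 2),
      sq_nonneg (a * b - b ^ 2), mul_nonneg hab (sq_nonneg (a - b))]

theorem sub_sq_le_max_sq_of_mul_nonneg (hy : 0 ≤ y) (hy' : 0 ≤ y') (hab : 0 ≤ a * b)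
    (hcirc : a ^ 2 + y ^ 2 = b ^ 2 + y' ^ 2) : (a - b) ^ 2 ≤ max y y' ^ 2 := by
  refine (sub_sq_le_abs_sq_sub_sq_of_mul_nonneg hab).trans ?_
  rw [show a ^ 2 - b ^ 2 = y' ^ 2 - y ^ 2 by linarith, abs_le]
  rcases le_total y y' with h | h
  · rw [max_eq_right h]; constructor <;> nlinarith
  · rw [max_eq_left h]; constructor <;> nlinarith

theorem sum_sq_le_four_mul_max_sq (hy : 0 ≤ y) (hy' : 0 ≤ y') (h : (a - b) ^ 2 ≤ max y y' ^ 2) :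
    (a - b) ^ 2 + y ^ 2 + y' ^ 2 ≤ 4 * max y y' ^ 2 ∧
      max y y' ^ 2 ≤ 2 * ((a - b) ^ 2 + y ^ 2 + y' ^ 2) := by
  rcases le_total y y' with h' | h'
  · rw [max_eq_right h'] at h ⊢; constructor <;> nlinarith
  · rw [max_eq_left h'] at h ⊢; constructor <;> nlinarith

theorem sum_sq_le_four_mul_sq_of_mul_neg {R : ℝ} (hab : a * b < 0) (hz : a ^ 2 + y ^ 2 = R ^ 2)
    (hz' : b ^ 2 + y' ^ 2 = R ^ 2) :
    (a - b) ^ 2 + y ^ 2 + y' ^ 2 ≤ 4 * R ^ 2 ∧ R ^ 2 ≤ 2 * ((a - b) ^ 2 + y ^ 2 + y' ^ 2) := by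
  constructor <;> nlinarith [sq_nonneg (a + b)]

end HeightBounds

theorem UpperHalfPlane.two_mul_cosh_dist (z w : ℍ) :
    2 * Real.cosh (dist z w) = ((z.re - w.re) ^ 2 + z.im ^ 2 + w.im ^ 2) / (z.im * w.im) := by
  rw [cosh_dist']
  field_simp [z.im_pos.ne', w.im_pos.ne']

theorem maxHeight_of_re_eq {z w : ℍ} (h : z.re = w.re) : maxHeight z w = max z.im w.im := by
  simp only [maxHeight, if_pos h]

theorem exists_maxHeight_of_re_ne {z w : ℍ} (h : z.re ≠ w.re) :
    ∃ c : ℝ, (z.re - c) ^ 2 + z.im ^ 2 = (w.re - c) ^ 2 + w.im ^ 2 ∧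
      maxHeight z w = if (z.re - c) * (w.re - c) < 0 then √((z.re - c) ^ 2 + z.im ^ 2)
        else max z.im w.im := by
  set c : ℝ := (‖(z : ℂ)‖ ^ 2 - ‖(w : ℂ)‖ ^ 2) / (2 * (z.re - w.re)) with hc
  have hd : z.re - w.re ≠ 0 := sub_ne_zero.mpr h
  refine ⟨c, ?_, ?_⟩
  · have hc' : c * (2 * (z.re - w.re)) = ‖(z : ℂ)‖ ^ 2 - ‖(w : ℂ)‖ ^ 2 :=
      div_mul_cancel₀ _ (mul_ne_zero two_ne_zero hd)
    simp only [Complex.sq_norm, Complex.normSq_apply, coe_re, coe_im] at hc'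
    clear_value c
    linear_combination -hc'
  · have hR : ‖(z : ℂ) - c‖ = √((z.re - c) ^ 2 + z.im ^ 2) := by
      rw [Complex.norm_def, Complex.normSq_apply]
      simp only [Complex.sub_re, Complex.sub_im, Complex.ofReal_re, Complex.ofReal_im, coe_re,
        coe_im, sub_zero, sq]
    rw [← hR]
    simp only [maxHeight, if_neg h]
    rfl

theorem maxHeight_pos (z w : ℍ) : 0 < maxHeight z w := by
  by_cases h : z.re = w.re
  · rw [maxHeight_of_re_eq h]
    exact lt_max_of_lt_left z.im_pos
  obtain ⟨c, -, hM⟩ := exists_maxHeight_of_re_ne h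
  rw [hM]
  split_ifs
  · exact Real.sqrt_pos.mpr (by positivity)
  · exact lt_max_of_lt_left z.im_pos

theorem maxHeight_sq_bounds (z w : ℍ) :
    (z.re - w.re) ^ 2 + z.im ^ 2 + w.im ^ 2 ≤ 4 * maxHeight z w ^ 2 ∧
      maxHeight z w ^ 2 ≤ 2 * ((z.re - w.re) ^ 2 + z.im ^ 2 + w.im ^ 2) := by
  have hy := z.im_pos.le
  have hy' := w.im_pos.le
  by_cases h : z.re = w.re
  · rw [maxHeight_of_re_eq h]
    exact sum_sq_le_four_mul_max_sq hy hy' (by rw [h, sub_self, zero_pow two_ne_zero]; positivity)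
  obtain ⟨c, hcirc, hM⟩ := exists_maxHeight_of_re_ne h
  have hsub : z.re - w.re = (z.re - c) - (w.re - c) := by ring
  rw [hM, hsub]
  split_ifs with hab
  · have hR : √((z.re - c) ^ 2 + z.im ^ 2) ^ 2 = (z.re - c) ^ 2 + z.im ^ 2 :=
      Real.sq_sqrt (by positivity)
    exact sum_sq_le_four_mul_sq_of_mul_neg hab hR.symm (hR.trans hcirc).symm
  · exact sum_sq_le_four_mul_max_sq hy hy'
      (sub_sq_le_max_sq_of_mul_nonneg hy hy' (not_lt.mp hab) hcirc)

theorem dist_sub_log_maxHeight_le (z z' : UpperHalfPlane) :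
    |dist z z' - (2 * Real.log (maxHeight z z') - Real.log z.im - Real.log z'.im)|
      ≤ Real.log 4 := by
  have hy := z.im_pos
  have hy' := z'.im_pos
  have hM := maxHeight_pos z z'
  set d := dist z z'
  set S := (z.re - z'.re) ^ 2 + z.im ^ 2 + z'.im ^ 2
  obtain ⟨hS_le, hM_le⟩ : S ≤ 4 * maxHeight z z' ^ 2 ∧ maxHeight z z' ^ 2 ≤ 2 * S :=
    maxHeight_sq_bounds z z'
  have h2cosh : 2 * Real.cosh d = S / (z.im * z'.im) := two_mul_cosh_dist z z'
  have hlog : 2 * Real.log (maxHeight z z') - Real.log z.im - Real.log z'.im =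
      Real.log (maxHeight z z' ^ 2 / (z.im * z'.im)) := by
    rw [Real.log_div (by positivity) (by positivity), Real.log_mul hy.ne' hy'.ne', Real.log_pow]
    push_cast
    ring
  rw [hlog]
  refine Real.abs_sub_log_le_log_of_exp_le_mul (by positivity) ?_ ?_
  · calc Real.exp d ≤ 2 * Real.cosh d := Real.exp_le_two_mul_cosh d
      _ = S / (z.im * z'.im) := h2cosh
      _ ≤ 4 * maxHeight z z' ^ 2 / (z.im * z'.im) := by gcongr
      _ = 4 * (maxHeight z z' ^ 2 / (z.im * z'.im)) := mul_div_assoc ..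
  · calc maxHeight z z' ^ 2 / (z.im * z'.im) ≤ 2 * S / (z.im * z'.im) := by gcongr
      _ = 2 * (2 * Real.cosh d) := by rw [h2cosh, mul_div_assoc]
      _ ≤ 4 * Real.exp d := by linarith [Real.cosh_le_exp (dist_nonneg : 0 ≤ d)]
end

section
/- For every z ∈ ℍ with Im z = q or Im z = q⁻¹, one has log(1 + (Re z)²) − log q ≤ dist(z, i) ≤ log q + 2·log(1 + |Re z|). -/
/-!
Let `w = Re z + i`. It lies on the vertical geodesic through `z`, at distance `|log Im z| = log q`
from `z`, and at distance `d` from `i` with `cosh d = 1 + (Re z)² / 2`, which forces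
`log (1 + (Re z)²) ≤ d ≤ 2 log (1 + |Re z|)`. Both bounds follow from the triangle inequality
through `w`.
-/

open UpperHalfPlane Real

namespace UpperHalfPlane

lemma dist_coe_vadd_I_I (x : ℝ) : dist ((x +ᵥ I : ℍ) : ℂ) (I : ℂ) = |x| := by
  rw [coe_vadd, Complex.dist_eq, add_sub_cancel_right, Complex.norm_real, norm_eq_abs]

lemma log_one_add_sq_le_dist_vadd_I_I (x : ℝ) : log (1 + x ^ 2) ≤ dist (x +ᵥ I) I := by
  have hcosh : cosh (dist (x +ᵥ I) I) = 1 + x ^ 2 / 2 := by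
    rw [cosh_dist, dist_coe_vadd_I_I, vadd_im, I_im, sq_abs]
    ring
  have hexp : exp (-dist (x +ᵥ I) I) ≤ 1 := exp_le_one_iff.2 (neg_nonpos.2 dist_nonneg)
  rw [cosh_eq] at hcosh
  rw [log_le_iff_le_exp (by positivity)]
  linarith

lemma dist_vadd_I_I_le_two_mul_log (x : ℝ) : dist (x +ᵥ I) I ≤ 2 * log (1 + |x|) := by
  have hx : 0 < 1 + |x| := by positivity
  have hinv : (1 + |x|)⁻¹ ≤ 1 := inv_le_one_of_one_le₀ (le_add_of_nonneg_right (abs_nonneg x))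
  rw [dist_le_iff_le_sinh, dist_coe_vadd_I_I, vadd_im, I_im, mul_one, sqrt_one,
    mul_div_cancel_left₀ _ two_ne_zero, sinh_log hx]
  linarith

lemma dist_re_vadd_I (z : ℍ) : dist z (z.re +ᵥ I) = |log z.im| := by
  rw [dist_of_re_eq (by rw [vadd_re, I_re, add_zero]), vadd_im, I_im, log_one, dist_zero_right,
    norm_eq_abs]

lemma log_one_add_re_sq_sub_abs_log_im_le_dist_I (z : ℍ) :
    log (1 + z.re ^ 2) - |log z.im| ≤ dist z I := by
  linarith [log_one_add_sq_le_dist_vadd_I_I z.re, dist_triangle (z.re +ᵥ I) z I,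
    dist_comm z (z.re +ᵥ I), dist_re_vadd_I z]

lemma dist_I_le_abs_log_im_add_two_mul_log (z : ℍ) :
    dist z I ≤ |log z.im| + 2 * log (1 + |z.re|) := by
  linarith [dist_vadd_I_I_le_two_mul_log z.re, dist_triangle z (z.re +ᵥ I) I, dist_re_vadd_I z]

end UpperHalfPlane

theorem log_le_dist_I_le_log (q : ℝ) (hq : 1 < q) (z : UpperHalfPlane)
    (hz : z.im = q ∨ z.im = q⁻¹) :
    Real.log (1 + z.re ^ 2) - Real.log q ≤ dist z UpperHalfPlane.I ∧
      dist z UpperHalfPlane.I ≤ Real.log q + 2 * Real.log (1 + |z.re|) := by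
  have hlog : |log z.im| = log q := by
    rcases hz with h | h
    · rw [h, abs_of_nonneg (log_nonneg hq.le)]
    · rw [h, log_inv, abs_neg, abs_of_nonneg (log_nonneg hq.le)]
  rw [← hlog]
  exact ⟨log_one_add_re_sq_sub_abs_log_im_le_dist_I z, dist_I_le_abs_log_im_add_two_mul_log z⟩
end

section
/- The function r is differentiable at 0, r(0) = B·e^b + e^{−b} > 0, and r'(0)/r(0) = E, where E = ((log q)²/(2b²)) · ((B−1)·b·cosh b + ((B+1)·b − (B−1))·sinh b) / ((B+1)·cosh b + (B−1)·sinh b) if b ≠ 0, and E = (log q)²/2 if b = 0. -/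
/-- `s(λ) = b² + (log q)²·λ`. -/
noncomputable def sFun (q b : ℝ) (lam : ℝ) : ℝ := b ^ 2 + (Real.log q) ^ 2 * lam

/-- `r(λ) = (B+1)·∑ s(λ)ⁿ/(2n)! + (B−1)·b·∑ s(λ)ⁿ/(2n+1)!`. -/
noncomputable def rFun (q b B : ℝ) (lam : ℝ) : ℝ :=
  (B + 1) * ∑' n : ℕ, sFun q b lam ^ n / ((2 * n).factorial : ℝ) +
    (B - 1) * b * ∑' n : ℕ, sFun q b lam ^ n / ((2 * n + 1).factorial : ℝ)

/-!
Write `r(λ) = (B+1) C(s(λ)) + (B-1) b S(s(λ))` with `C(x²) = cosh x` and `x S(x²) = sinh x`.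
`C` and `S` are entire power series in `s`, so they may be differentiated termwise, giving
`C' = S / 2` and `2 s S' = C - S`. Since `s(0) = b²` and `s' = (log q)²`, the value and
the derivative of `r` at `0` are thereby expressed through `cosh b` and `sinh b`.
-/

open Real Nat

theorem summable_natCast_mul_pow_pred_div_factorial (x : ℝ) :
    Summable fun n : ℕ => n * x ^ (n - 1) / n ! := by
  rw [← summable_nat_add_iff 1]
  refine (Real.summable_pow_div_factorial x).congr fun n => ?_
  rw [Nat.add_sub_cancel, Nat.factorial_succ]
  push_cast
  field_simp

theorem summable_mul_pow_of_abs_le_inv_factorial {a : ℕ → ℝ} (ha : ∀ n, |a n| ≤ (n ! : ℝ)⁻¹)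
    (x : ℝ) :
    Summable fun n => a n * x ^ n := by
  refine .of_norm_bounded (Real.summable_pow_div_factorial |x|) fun n => ?_
  rw [norm_mul, norm_pow, Real.norm_eq_abs, Real.norm_eq_abs, div_eq_inv_mul]
  gcongr
  exact ha n

theorem hasDerivAt_tsum_mul_pow_of_abs_le_inv_factorial {a : ℕ → ℝ}
    (ha : ∀ n, |a n| ≤ (n ! : ℝ)⁻¹) (x : ℝ) :
    HasDerivAt (fun s => ∑' n, a n * s ^ n) (∑' n, (n + 1) * a (n + 1) * x ^ n) x := by
  set R := |x| + 1
  have hx : x ∈ Metric.ball 0 R := by simp [R]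
  have hbound : ∀ n, ∀ y ∈ Metric.ball (0 : ℝ) R,
      ‖a n * (n * y ^ (n - 1))‖ ≤ n * R ^ (n - 1) / n ! := fun n y hy => by
    have hyR : |y| ≤ R := (mem_ball_zero_iff.mp hy).le
    rw [Real.norm_eq_abs, abs_mul, abs_mul, abs_pow, Nat.abs_cast, div_eq_inv_mul]
    gcongr
    exact ha n
  have hderiv := hasDerivAt_tsum_of_isPreconnected (summable_natCast_mul_pow_pred_div_factorial R)
    Metric.isOpen_ball (convex_ball 0 R).isPreconnected
    (fun n y _ => (hasDerivAt_pow n y).const_mul (a n)) hbound hx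
    (summable_mul_pow_of_abs_le_inv_factorial ha x) hx
  have hsum : Summable fun n => a n * (n * x ^ (n - 1)) :=
    .of_norm_bounded (summable_natCast_mul_pow_pred_div_factorial R) (hbound · x hx)
  refine hderiv.congr_deriv ?_
  rw [hsum.tsum_eq_zero_add]
  simp only [Nat.cast_zero, zero_mul, mul_zero, zero_add, Nat.cast_succ, Nat.add_sub_cancel]
  exact tsum_congr fun n => by ring

theorem abs_inv_factorial_le_inv_factorial {m n : ℕ} (h : n ≤ m) :
    |(m ! : ℝ)⁻¹| ≤ (n ! : ℝ)⁻¹ := by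
  rw [abs_of_pos (by positivity)]
  gcongr

/- Power series in `s = x²` rather than `cosh ∘ √`: for `s < 0` they are `cos √(-s)` and
`sin √(-s) / √(-s)`, and `√` is not differentiable at `0` (the case `b = 0`). -/
noncomputable def coshSeries (s : ℝ) : ℝ := ∑' n : ℕ, s ^ n / ((2 * n).factorial : ℝ)

noncomputable def sinhSeries (s : ℝ) : ℝ := ∑' n : ℕ, s ^ n / ((2 * n + 1).factorial : ℝ)

theorem coshSeries_sq (x : ℝ) : coshSeries (x ^ 2) = cosh x := by
  simp_rw [coshSeries, ← pow_mul]
  exact (Real.hasSum_cosh x).tsum_eq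

theorem mul_sinhSeries_sq (x : ℝ) : x * sinhSeries (x ^ 2) = sinh x := by
  rw [sinhSeries, ← tsum_mul_left]
  refine (tsum_congr fun n => ?_).trans (Real.hasSum_sinh x).tsum_eq
  ring

theorem sinhSeries_zero : sinhSeries 0 = 1 := by
  rw [sinhSeries, tsum_eq_single 0 fun n hn => by simp [hn]]
  simp

theorem coshSeries_eq_tsum_mul_pow :
    coshSeries = fun s => ∑' n : ℕ, ((2 * n) ! : ℝ)⁻¹ * s ^ n := by
  funext s
  simp_rw [coshSeries, div_eq_inv_mul]

theorem sinhSeries_eq_tsum_mul_pow :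
    sinhSeries = fun s => ∑' n : ℕ, ((2 * n + 1) ! : ℝ)⁻¹ * s ^ n := by
  funext s
  simp_rw [sinhSeries, div_eq_inv_mul]

theorem hasDerivAt_coshSeries (s : ℝ) : HasDerivAt coshSeries (sinhSeries s / 2) s := by
  rw [coshSeries_eq_tsum_mul_pow, sinhSeries_eq_tsum_mul_pow, ← tsum_div_const]
  refine (hasDerivAt_tsum_mul_pow_of_abs_le_inv_factorial
    (fun n => abs_inv_factorial_le_inv_factorial (by omega)) s).congr_deriv
    (tsum_congr fun n => ?_)
  rw [show 2 * (n + 1) = 2 * n + 1 + 1 by ring, Nat.factorial_succ]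
  push_cast
  field_simp
  ring

theorem hasDerivAt_sinhSeries (s : ℝ) :
    HasDerivAt sinhSeries (∑' n : ℕ, (n + 1) * ((2 * (n + 1) + 1) ! : ℝ)⁻¹ * s ^ n) s := by
  rw [sinhSeries_eq_tsum_mul_pow]
  exact hasDerivAt_tsum_mul_pow_of_abs_le_inv_factorial
    (fun n => abs_inv_factorial_le_inv_factorial (by omega)) s

theorem differentiable_sinhSeries : Differentiable ℝ sinhSeries :=
  fun s => (hasDerivAt_sinhSeries s).differentiableAt

theorem two_mul_mul_deriv_sinhSeries (s : ℝ) :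
    2 * s * deriv sinhSeries s = coshSeries s - sinhSeries s := by
  have hC := summable_mul_pow_of_abs_le_inv_factorial (a := fun n => ((2 * n) ! : ℝ)⁻¹)
    (fun n => abs_inv_factorial_le_inv_factorial (by omega)) s
  have hS := summable_mul_pow_of_abs_le_inv_factorial (a := fun n => ((2 * n + 1) ! : ℝ)⁻¹)
    (fun n => abs_inv_factorial_le_inv_factorial (by omega)) s
  rw [(hasDerivAt_sinhSeries s).deriv, coshSeries_eq_tsum_mul_pow, sinhSeries_eq_tsum_mul_pow]
  beta_reduce
  rw [← hC.tsum_sub hS, (hC.sub hS).tsum_eq_zero_add, ← tsum_mul_left]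
  simp only [mul_zero, factorial_zero, cast_one, inv_one, pow_zero, mul_one, zero_add,
    factorial_one, sub_self]
  refine tsum_congr fun n => ?_
  rw [Nat.factorial_succ (2 * (n + 1))]
  push_cast
  field_simp
  ring

theorem rFun_eq (q b B : ℝ) : rFun q b B =
    fun lam => (B + 1) * coshSeries (sFun q b lam) + (B - 1) * b * sinhSeries (sFun q b lam) :=
  rfl

theorem hasDerivAt_sFun (q b lam : ℝ) : HasDerivAt (sFun q b) (log q ^ 2) lam := by
  have h := ((hasDerivAt_id' lam).const_mul (log q ^ 2)).const_add (b ^ 2)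
  rwa [mul_one] at h

theorem rFun_zero (q b B : ℝ) : rFun q b B 0 = (B + 1) * cosh b + (B - 1) * sinh b := by
  simp only [rFun_eq, sFun, mul_zero, add_zero, coshSeries_sq, mul_assoc, mul_sinhSeries_sq]

theorem hasDerivAt_rFun_zero (q b B : ℝ) :
    HasDerivAt (rFun q b B)
      ((B + 1) * (sinhSeries (b ^ 2) / 2 * log q ^ 2) +
        (B - 1) * b * (deriv sinhSeries (b ^ 2) * log q ^ 2)) 0 := by
  have hs : sFun q b 0 = b ^ 2 := by simp [sFun]
  have hC := (hasDerivAt_coshSeries (sFun q b 0)).comp 0 (hasDerivAt_sFun q b 0)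
  have hS := (differentiable_sinhSeries (sFun q b 0)).hasDerivAt.comp 0 (hasDerivAt_sFun q b 0)
  rw [hs] at hC hS
  exact (hC.const_mul (B + 1)).add (hS.const_mul ((B - 1) * b))

theorem rFun_differentiableAt_zero_and_log_deriv_general
    (q b B : ℝ) (hB : 0 < B) :
    DifferentiableAt ℝ (rFun q b B) 0 ∧
      rFun q b B 0 = B * Real.exp b + Real.exp (-b) ∧
      0 < rFun q b B 0 ∧
      (b ≠ 0 →
        deriv (rFun q b B) 0 / rFun q b B 0 =
          (Real.log q) ^ 2 / (2 * b ^ 2) *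
            (((B - 1) * b * Real.cosh b + ((B + 1) * b - (B - 1)) * Real.sinh b) /
              ((B + 1) * Real.cosh b + (B - 1) * Real.sinh b))) ∧
      (b = 0 → deriv (rFun q b B) 0 / rFun q b B 0 = (Real.log q) ^ 2 / 2) := by
  have hr := hasDerivAt_rFun_zero q b B
  have hr0 : rFun q b B 0 = B * exp b + exp (-b) := by
    rw [rFun_zero, cosh_eq, sinh_eq]
    ring
  have hpos : 0 < rFun q b B 0 := hr0 ▸ by positivity
  refine ⟨hr.differentiableAt, hr0, hpos, fun hb => ?_, fun hb => ?_⟩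
  · have hS : sinhSeries (b ^ 2) = sinh b / b := by
      rw [← mul_sinhSeries_sq b]
      field_simp
    have hD : deriv sinhSeries (b ^ 2) = (cosh b - sinh b / b) / (2 * b ^ 2) := by
      rw [← coshSeries_sq, ← hS, ← two_mul_mul_deriv_sinhSeries]
      field_simp
    rw [hr.deriv, rFun_zero, hD, hS]
    field_simp
    ring
  · subst hb
    rw [hr.deriv, rFun_zero]
    simp only [zero_pow two_ne_zero, sinhSeries_zero, cosh_zero, sinh_zero, mul_zero, zero_mul,
      add_zero, mul_one]
    field_simp

theorem rFun_differentiableAt_zero_and_log_deriv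
    (q b B : ℝ) (hq : 1 < q) (hB : 0 < B) :
    DifferentiableAt ℝ (rFun q b B) 0 ∧
      rFun q b B 0 = B * Real.exp b + Real.exp (-b) ∧
      0 < rFun q b B 0 ∧
      (b ≠ 0 →
        deriv (rFun q b B) 0 / rFun q b B 0 =
          (Real.log q) ^ 2 / (2 * b ^ 2) *
            (((B - 1) * b * Real.cosh b + ((B + 1) * b - (B - 1)) * Real.sinh b) /
              ((B + 1) * Real.cosh b + (B - 1) * Real.sinh b))) ∧
      (b = 0 → deriv (rFun q b B) 0 / rFun q b B 0 = (Real.log q) ^ 2 / 2) :=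
  rFun_differentiableAt_zero_and_log_deriv_general q b B hB
end

section
/- The subgroup of GL₂(ℚ) generated by {a, b} is exactly the set of matrices of the form [[p^n, k·p^{−l}], [0, 1]] with n, k, l ∈ ℤ. -/
/-!
The matrices `[[p^n, y], [0, 1]]` with `y ∈ ℤ[1/p]` form a subgroup: products and inverses of
such matrices only multiply the corner entry by powers of `p` and add such entries, and `ℤ[1/p]`
is stable under both. It contains `a` and `b`, hence `⟨a, b⟩`; conversely every such matrix is
`a^(-l) * b^k * a^(l + n)`.
-/

variable {K : Type*} [Field K]

namespace Matrix

theorem affine_mul (x y x' y' : K) :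
    !![x, y; 0, 1] * !![x', y'; 0, 1] = !![x * x', x * y' + y; 0, 1] := by
  simp

theorem affine_inv {x : K} (hx : x ≠ 0) (y : K) :
    (!![x, y; 0, 1])⁻¹ = !![x⁻¹, -(x⁻¹ * y); 0, 1] := by
  refine inv_eq_right_inv ?_
  rw [affine_mul, one_fin_two, mul_inv_cancel₀ hx, mul_neg, ← mul_assoc, mul_inv_cancel₀ hx]
  simp

theorem affine_eq_diag_mul_unitriangular_mul_diag {x : K} (hx : x ≠ 0) (y : K) (m n : ℤ) :
    !![x ^ n, y * x ^ (-m); 0, 1] =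
      !![x ^ (-m), 0; 0, 1] * !![1, y; 0, 1] * !![x ^ (m + n), 0; 0, 1] := by
  rw [affine_mul, affine_mul, mul_one, ← zpow_add₀ hx, neg_add_cancel_left]
  simp [mul_comm]

theorem coe_units_zpow_of_eq_diag {g : (Matrix (Fin 2) (Fin 2) K)ˣ} {x : K} (hx : x ≠ 0)
    (hg : (g : Matrix (Fin 2) (Fin 2) K) = !![x, 0; 0, 1]) (m : ℤ) :
    ((g ^ m : (Matrix (Fin 2) (Fin 2) K)ˣ) : Matrix (Fin 2) (Fin 2) K) = !![x ^ m, 0; 0, 1] := by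
  induction m using Int.induction_on with
  | zero => simp [one_fin_two]
  | succ m ih =>
    rw [_root_.zpow_add_one, Units.val_mul, ih, hg, affine_mul, zpow_add_one₀ hx]
    simp
  | pred m ih =>
    rw [_root_.zpow_sub_one, Units.val_mul, ih, coe_units_inv, hg, affine_inv hx, affine_mul,
      zpow_sub_one₀ hx]
    simp

theorem coe_units_zpow_of_eq_unitriangular {g : (Matrix (Fin 2) (Fin 2) K)ˣ}
    (hg : (g : Matrix (Fin 2) (Fin 2) K) = !![1, 1; 0, 1]) (m : ℤ) :
    ((g ^ m : (Matrix (Fin 2) (Fin 2) K)ˣ) : Matrix (Fin 2) (Fin 2) K) = !![1, (m : K); 0, 1] := by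
  induction m using Int.induction_on with
  | zero => simp [one_fin_two]
  | succ m ih =>
    rw [_root_.zpow_add_one, Units.val_mul, ih, hg, affine_mul]
    push_cast
    simp [add_comm]
  | pred m ih =>
    rw [_root_.zpow_sub_one, Units.val_mul, ih, coe_units_inv, hg, affine_inv one_ne_zero,
      affine_mul]
    push_cast
    simp [sub_eq_add_neg, add_comm]

end Matrix

theorem exists_intCast_mul_zpow_neg_eq_of_le (p : ℕ) (hp : (p : K) ≠ 0) (k : ℤ) {l L : ℤ}
    (h : l ≤ L) : ∃ k' : ℤ, (k : K) * (p : K) ^ (-l) = k' * (p : K) ^ (-L) := by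
  obtain ⟨m, rfl⟩ := Int.le.dest h
  refine ⟨k * p ^ m, ?_⟩
  rw [neg_add, zpow_add₀ hp, zpow_neg _ (m : ℤ), zpow_natCast]
  push_cast
  field_simp

theorem exists_intCast_mul_zpow_neg_add (p : ℕ) (hp : (p : K) ≠ 0) (k₁ k₂ l₁ l₂ : ℤ) :
    ∃ k l : ℤ, (k₁ : K) * (p : K) ^ (-l₁) + k₂ * (p : K) ^ (-l₂) = k * (p : K) ^ (-l) := by
  obtain ⟨k₁', h₁⟩ := exists_intCast_mul_zpow_neg_eq_of_le p hp k₁ (le_max_left l₁ l₂)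
  obtain ⟨k₂', h₂⟩ := exists_intCast_mul_zpow_neg_eq_of_le p hp k₂ (le_max_right l₁ l₂)
  exact ⟨k₁' + k₂', max l₁ l₂, by rw [h₁, h₂]; push_cast; ring⟩

variable (K) in
def bsAffineSubgroup (p : ℕ) (hp : (p : K) ≠ 0) : Subgroup (Matrix (Fin 2) (Fin 2) K)ˣ where
  carrier := {g | ∃ n k l : ℤ,
    (g : Matrix (Fin 2) (Fin 2) K) = !![(p : K) ^ n, (k : K) * (p : K) ^ (-l); 0, 1]}
  one_mem' := ⟨0, 0, 0, by simp [Matrix.one_fin_two]⟩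
  mul_mem' := by
    rintro g h ⟨n₁, k₁, l₁, hg⟩ ⟨n₂, k₂, l₂, hh⟩
    obtain ⟨k, l, hkl⟩ := exists_intCast_mul_zpow_neg_add p hp k₂ k₁ (l₂ - n₁) l₁
    have hk : (p : K) ^ n₁ * (k₂ * p ^ (-l₂)) + k₁ * p ^ (-l₁) = k * p ^ (-l) := by
      rw [← hkl, neg_sub, zpow_sub₀ hp, zpow_neg]
      ring
    exact ⟨n₁ + n₂, k, l, by rw [Units.val_mul, hg, hh, Matrix.affine_mul, zpow_add₀ hp, hk]⟩
  inv_mem' := by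
    rintro g ⟨n, k, l, hg⟩
    have hk : -((p : K) ^ (-n) * (k * p ^ (-l))) = ((-k : ℤ) : K) * p ^ (-(l + n)) := by
      rw [neg_add, zpow_add₀ hp]
      push_cast
      ring
    exact ⟨-n, -k, l + n, by
      rw [Matrix.coe_units_inv, hg, Matrix.affine_inv (zpow_ne_zero n hp), ← zpow_neg, hk]⟩

/-- The matrix realization of the Baumslag–Solitar group `BS(p)`:
the subgroup of `GL₂(ℚ)` generated by `a = [[p,0],[0,1]]` and `b = [[1,1],[0,1]]`
is exactly the set of matrices `[[p^n, k·p^{-l}],[0,1]]` with `n, k, l ∈ ℤ`. -/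
theorem baumslagSolitar_matrix_representation (p : ℕ) (hp : 2 ≤ p)
    (a b : (Matrix (Fin 2) (Fin 2) ℚ)ˣ)
    (ha : (a : Matrix (Fin 2) (Fin 2) ℚ) = !![(p : ℚ), 0; 0, 1])
    (hb : (b : Matrix (Fin 2) (Fin 2) ℚ) = !![1, 1; 0, 1]) :
    (Subgroup.closure {a, b} : Set (Matrix (Fin 2) (Fin 2) ℚ)ˣ) =
      {g : (Matrix (Fin 2) (Fin 2) ℚ)ˣ | ∃ n k l : ℤ,
        (g : Matrix (Fin 2) (Fin 2) ℚ) =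
          !![(p : ℚ) ^ n, (k : ℚ) * (p : ℚ) ^ (-l); 0, 1]} := by
  have hp0 : (p : ℚ) ≠ 0 := by positivity
  have hle : Subgroup.closure {a, b} ≤ bsAffineSubgroup ℚ p hp0 := by
    rw [Subgroup.closure_le, Set.insert_subset_iff, Set.singleton_subset_iff]
    exact ⟨⟨1, 0, 0, by simp [ha]⟩, ⟨0, 1, 0, by simp [hb]⟩⟩
  have hge : bsAffineSubgroup ℚ p hp0 ≤ Subgroup.closure {a, b} := by
    rintro g ⟨n, k, l, hg⟩
    have hfactor : g = a ^ (-l) * b ^ k * a ^ (l + n) := by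
      ext : 1
      rw [hg, Units.val_mul, Units.val_mul, Matrix.coe_units_zpow_of_eq_diag hp0 ha,
        Matrix.coe_units_zpow_of_eq_unitriangular hb, Matrix.coe_units_zpow_of_eq_diag hp0 ha,
        Matrix.affine_eq_diag_mul_unitriangular_mul_diag hp0]
    have ha_mem : a ∈ Subgroup.closure {a, b} := Subgroup.subset_closure (by simp)
    have hb_mem : b ∈ Subgroup.closure {a, b} := Subgroup.subset_closure (by simp)
    rw [hfactor]
    exact mul_mem (mul_mem (zpow_mem ha_mem _) (zpow_mem hb_mem _)) (zpow_mem ha_mem _)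
  exact congrArg SetLike.coe (hle.antisymm hge)
end

section
/- Let (z_n)_{n≥0} be a sequence in ℍ and b ∈ ℝ such that log(Im z_n)/n → b and dist(z_{n+1}, z_n)/n → 0 as n → ∞. Then dist(z_n, z_0)/n → |b| as n → ∞, and there exists a geodesic ray γ : [0,∞) → ℍ such that dist(z_n, γ(|b|·n))/n → 0 as n → ∞. -/
/-!
Since `log (Im z_n) = b n + o(n)` and consecutive points are `o(n)` apart, the bound
`|Re z - Re w| ≤ √(Im z Im w) e^{d(z, w)/2}` shows that the real parts move by at most
`exp (b n + o(n))` per step. Summing, `Re z_n = O(e^{(b + ε) n})` when `b ≥ 0`, while for `b < 0`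
the increments are summable and `Re z_n` converges to some `x` at rate `O(e^{(b + ε) n})`.
Either way `z_n` is within `o(n)` of the point `x + i e^{b n}` of the vertical geodesic over `x`:
climb to height `e^{(b + ε) n}`, cross horizontally at bounded cost, and descend. The rate
`dist(z_n, z_0)/n → |b|` then follows from the triangle inequality along that geodesic.
-/

open Filter UpperHalfPlane
open Real Asymptotics Topology

lemma isLittleO_natCast_iff_tendsto_div {f : ℕ → ℝ} :
    f =o[atTop] (fun n : ℕ => (n : ℝ)) ↔ Tendsto (fun n : ℕ => f n / n) atTop (𝓝 0) :=
  isLittleO_iff_tendsto' <|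
    (eventually_ne_atTop 0).mono fun n hn h => absurd h (by exact_mod_cast hn)

lemma isLittleO_sub_mul_natCast_iff_tendsto_div {f : ℕ → ℝ} {L : ℝ} :
    (fun n : ℕ => f n - L * n) =o[atTop] (fun n : ℕ => (n : ℝ)) ↔
      Tendsto (fun n : ℕ => f n / n) atTop (𝓝 L) := by
  rw [isLittleO_natCast_iff_tendsto_div,
    ← tendsto_sub_nhds_zero_iff (u := fun n : ℕ => f n / n)]
  refine tendsto_congr' <| (eventually_ne_atTop 0).mono fun n hn => ?_
  have : (n : ℝ) ≠ 0 := by exact_mod_cast hn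
  field_simp

lemma Asymptotics.IsLittleO.comp_add_one {f : ℕ → ℝ}
    (hf : f =o[atTop] (fun n : ℕ => (n : ℝ))) :
    (fun n : ℕ => f (n + 1)) =o[atTop] (fun n : ℕ => (n : ℝ)) := by
  refine (hf.comp_tendsto (tendsto_add_atTop_nat 1)).trans_isBigO ?_
  refine IsBigO.of_bound 2 <| (eventually_ge_atTop 1).mono fun n hn => ?_
  have : (1 : ℝ) ≤ n := by exact_mod_cast hn
  simp only [Function.comp_apply, Nat.cast_add, Nat.cast_one, Real.norm_eq_abs]
  rw [abs_of_pos (by positivity), abs_of_pos (by positivity)]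
  linarith

lemma isLittleO_const_natCast (c : ℝ) : (fun _ : ℕ => c) =o[atTop] (fun n : ℕ => (n : ℝ)) :=
  isLittleO_const_left.2 <| Or.inr <| tendsto_norm_atTop_atTop.comp tendsto_natCast_atTop_atTop

def ExpGrowthLE (u : ℕ → ℝ) (c : ℝ) : Prop :=
  ∀ c' > c, u =O[atTop] fun n : ℕ => exp (c' * n)

lemma expGrowthLE_iff {u : ℕ → ℝ} {c : ℝ} :
    ExpGrowthLE u c ↔ ∀ c' > c, ∃ C, ∀ n : ℕ, |u n| ≤ C * exp c' ^ n := by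
  refine forall₂_congr fun c' _ => ?_
  rw [isBigO_nat_atTop_iff fun n h => absurd h (exp_pos _).ne']
  simp only [Real.norm_eq_abs, mul_comm c', exp_nat_mul, abs_pow, abs_exp]

lemma ExpGrowthLE.of_isLittleO {u g : ℕ → ℝ} {c : ℝ}
    (hg : g =o[atTop] (fun n : ℕ => (n : ℝ))) (hu : ∀ n, |u n| ≤ exp (c * n + g n)) :
    ExpGrowthLE u c := fun c' hc' => by
  refine IsBigO.of_bound 1 <| (hg.bound (sub_pos.2 hc')).mono fun n hn => ?_
  simp only [Real.norm_eq_abs, abs_exp, one_mul, Nat.abs_cast] at hn ⊢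
  exact (hu n).trans <| exp_le_exp.2 <| by linarith [le_abs_self (g n)]

lemma ExpGrowthLE.of_succ_sub {u : ℕ → ℝ} {c : ℝ}
    (h : ExpGrowthLE (fun n => u (n + 1) - u n) c) (hc : 0 ≤ c) : ExpGrowthLE u c := by
  rw [expGrowthLE_iff] at h ⊢
  intro c' hc'
  obtain ⟨C, hC⟩ := h c' hc'
  have hC0 : 0 ≤ C := by simpa using (abs_nonneg _).trans (hC 0)
  set r := exp c'
  have hr : 1 < r := one_lt_exp_iff.2 (hc.trans_lt hc')
  refine ⟨|u 0| + C / (r - 1), fun n => ?_⟩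
  have hsum : dist (u 0) (u n) ≤ C * ((r ^ n - 1) / (r - 1)) := by
    rw [← geom_sum_eq hr.ne', Finset.mul_sum]
    exact dist_le_range_sum_of_dist_le n fun {k} _ => by
      rw [dist_comm, Real.dist_eq]; exact hC k
  have hrn : 1 ≤ r ^ n := one_le_pow₀ hr.le
  calc |u n| ≤ |u 0| + dist (u 0) (u n) := by
        rw [Real.dist_eq, abs_sub_comm]; linarith [abs_sub_abs_le_abs_sub (u n) (u 0)]
    _ ≤ |u 0| * r ^ n + C / (r - 1) * r ^ n := by
        gcongr
        · exact le_mul_of_one_le_right (abs_nonneg _) hrn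
        · refine hsum.trans ?_
          rw [mul_div_assoc', div_mul_eq_mul_div]
          gcongr
          linarith
    _ = (|u 0| + C / (r - 1)) * r ^ n := by ring

lemma ExpGrowthLE.exists_sub_of_succ_sub_of_neg {u : ℕ → ℝ} {c : ℝ}
    (h : ExpGrowthLE (fun n => u (n + 1) - u n) c) (hc : c < 0) :
    ∃ x, ExpGrowthLE (fun n => u n - x) c := by
  rw [expGrowthLE_iff] at h
  have geometric : ∀ d > c, ∃ C, ∀ n, dist (u n) (u (n + 1)) ≤ C * exp d ^ n := fun d hd =>
    (h d hd).imp fun C hC n => by rw [dist_comm, Real.dist_eq]; exact hC n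
  obtain ⟨C, hC⟩ := geometric (c / 2) (by linarith)
  obtain ⟨x, hx⟩ := cauchySeq_tendsto_of_complete <|
    cauchySeq_of_le_geometric _ C (exp_lt_one_iff.2 (by linarith)) hC
  refine ⟨x, expGrowthLE_iff.2 fun c' hc' => ?_⟩
  set d := min c' (c / 2)
  obtain ⟨C, hC⟩ := geometric d (lt_min hc' (by linarith))
  have hd : exp d < 1 := exp_lt_one_iff.2 <| (min_le_right _ _).trans_lt (by linarith)
  refine ⟨C / (1 - exp d), fun n => ?_⟩
  have hC0 : 0 ≤ C := by simpa using dist_nonneg.trans (hC 0)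
  calc |u n - x| ≤ C * exp d ^ n / (1 - exp d) := by
        rw [← Real.dist_eq]; exact dist_le_of_le_geometric_of_tendsto _ C hd hC hx n
    _ ≤ C / (1 - exp d) * exp c' ^ n := by
        rw [div_mul_eq_mul_div]
        gcongr
        exact min_le_left _ _

lemma ExpGrowthLE.exists_sub_of_succ_sub {u : ℕ → ℝ} {c : ℝ}
    (h : ExpGrowthLE (fun n => u (n + 1) - u n) c) : ∃ x, ExpGrowthLE (fun n => u n - x) c := by
  rcases le_or_gt 0 c with hc | hc
  · exact ⟨0, by simpa only [sub_zero] using h.of_succ_sub hc⟩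
  · exact h.exists_sub_of_succ_sub_of_neg hc

lemma isLittleO_dist_sub_of_geodesic {X : Type*} [PseudoMetricSpace X] {z : ℕ → X}
    {γ : ℝ → X} {a : ℝ} (ha : 0 ≤ a) (hγ : ∀ s t, 0 ≤ s → 0 ≤ t → dist (γ s) (γ t) = |s - t|)
    (h : (fun n => dist (z n) (γ (a * n))) =o[atTop] (fun n : ℕ => (n : ℝ))) :
    (fun n => dist (z n) (z 0) - a * n) =o[atTop] (fun n : ℕ => (n : ℝ)) := by
  refine IsBigO.trans_isLittleO ?_ (h.add (isLittleO_const_natCast (dist (z 0) (γ 0))))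
  refine IsBigO.of_bound 1 (Eventually.of_forall fun n => ?_)
  have hγn : dist (γ (a * n)) (γ 0) = a * n := by
    rw [hγ _ _ (by positivity) le_rfl, sub_zero, abs_of_nonneg (by positivity)]
  calc ‖dist (z n) (z 0) - a * n‖ = dist (dist (z n) (z 0)) (dist (γ (a * n)) (γ 0)) := by
        rw [hγn, Real.dist_eq, Real.norm_eq_abs]
    _ ≤ dist (z n) (γ (a * n)) + dist (z 0) (γ 0) := dist_dist_dist_le _ _ _ _
    _ = 1 * ‖dist (z n) (γ (a * n)) + dist (z 0) (γ 0)‖ := by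
        rw [one_mul, Real.norm_of_nonneg (by positivity)]

namespace UpperHalfPlane

noncomputable def ofReLogIm (x t : ℝ) : ℍ := mk ⟨x, exp t⟩ (exp_pos t)

@[simp] lemma ofReLogIm_re (x t : ℝ) : (ofReLogIm x t).re = x := rfl
@[simp] lemma ofReLogIm_im (x t : ℝ) : (ofReLogIm x t).im = exp t := rfl
@[simp] lemma coe_ofReLogIm (x t : ℝ) : (ofReLogIm x t : ℂ) = ⟨x, exp t⟩ := rfl

lemma dist_ofReLogIm_re (z : ℍ) (t : ℝ) : dist z (ofReLogIm z.re t) = |log z.im - t| := by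
  rw [dist_of_re_eq (ofReLogIm_re _ _).symm, ofReLogIm_im, log_exp, Real.dist_eq]

lemma dist_ofReLogIm_ofReLogIm (x s t : ℝ) : dist (ofReLogIm x s) (ofReLogIm x t) = |s - t| := by
  simpa using dist_ofReLogIm_re (ofReLogIm x s) t

lemma dist_ofReLogIm_le (x x' t : ℝ) :
    dist (ofReLogIm x t) (ofReLogIm x' t) ≤ |x - x'| / exp t := by
  refine (dist_le_dist_coe_div_sqrt _ _).trans_eq ?_
  rw [coe_ofReLogIm, coe_ofReLogIm, Complex.dist_of_im_eq (z := ⟨x, exp t⟩) (w := ⟨x', exp t⟩) rfl,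
    ofReLogIm_im, ofReLogIm_im, sqrt_mul_self (exp_pos t).le, Real.dist_eq]

lemma dist_le_of_log_im_le {z w : ℍ} {T : ℝ} (hz : log z.im ≤ T) (hw : log w.im ≤ T) :
    dist z w ≤ (T - log z.im) + |z.re - w.re| / exp T + (T - log w.im) := by
  calc dist z w ≤ dist z (ofReLogIm z.re T) + dist (ofReLogIm z.re T) (ofReLogIm w.re T)
        + dist (ofReLogIm w.re T) w := dist_triangle4 _ _ _ _
    _ ≤ (T - log z.im) + |z.re - w.re| / exp T + (T - log w.im) := by
        rw [dist_ofReLogIm_re, dist_comm _ w, dist_ofReLogIm_re,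
          abs_of_nonpos (sub_nonpos.2 hz), abs_of_nonpos (sub_nonpos.2 hw), neg_sub, neg_sub]
        gcongr
        exact dist_ofReLogIm_le _ _ _

lemma abs_re_sub_re_le (z w : ℍ) :
    |z.re - w.re| ≤ exp ((log z.im + log w.im + dist z w) / 2) := by
  have hsqrt : √(z.im * w.im) = exp ((log z.im + log w.im) / 2) := by
    rw [exp_half, exp_add, exp_log z.im_pos, exp_log w.im_pos]
  calc |z.re - w.re| ≤ dist (z : ℂ) w := by
        simpa [Complex.dist_eq] using Complex.abs_re_le_norm ((z : ℂ) - w)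
    _ = 2 * √(z.im * w.im) * sinh (dist z w / 2) := by
        rw [sinh_half_dist]; field_simp
    _ ≤ 2 * √(z.im * w.im) * (exp (dist z w / 2) / 2) := by
        gcongr
        rw [sinh_eq]
        linarith [exp_pos (-(dist z w / 2))]
    _ = exp ((log z.im + log w.im + dist z w) / 2) := by
        rw [hsqrt, add_div _ (dist z w), exp_add]; ring

lemma expGrowthLE_re_succ_sub {z : ℕ → ℍ} {b : ℝ}
    (hlog : (fun n => log (z n).im - b * n) =o[atTop] (fun n : ℕ => (n : ℝ)))
    (hstep : (fun n => dist (z (n + 1)) (z n)) =o[atTop] (fun n : ℕ => (n : ℝ))) :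
    ExpGrowthLE (fun n => (z (n + 1)).re - (z n).re) b := by
  refine ExpGrowthLE.of_isLittleO ((((hlog.comp_add_one.add hlog).add hstep).add
    (isLittleO_const_natCast b)).const_mul_left 2⁻¹) fun n => ?_
  refine (abs_re_sub_re_le _ _).trans_eq (congrArg exp ?_)
  push_cast
  ring

lemma isLittleO_dist_ofReLogIm {z : ℕ → ℍ} {b x : ℝ}
    (hlog : (fun n => log (z n).im - b * n) =o[atTop] (fun n : ℕ => (n : ℝ)))
    (hre : ExpGrowthLE (fun n => (z n).re - x) b) :
    (fun n => dist (z n) (ofReLogIm x (b * n))) =o[atTop] (fun n : ℕ => (n : ℝ)) := by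
  refine isLittleO_iff.2 fun ε hε => ?_
  obtain ⟨C, hC⟩ := (hre (b + ε / 4) (by linarith)).bound
  filter_upwards [hC, hlog.bound (c := ε / 4) (by positivity),
    tendsto_natCast_atTop_atTop.eventually_ge_atTop (4 * C / ε)] with n hre_n hlog_n hn
  simp only [Real.norm_eq_abs, abs_exp, Nat.abs_cast, abs_of_nonneg dist_nonneg]
    at hre_n hlog_n ⊢
  have hn0 : (0 : ℝ) ≤ n := n.cast_nonneg
  have hCn : C ≤ ε / 4 * n := by linarith [(div_le_iff₀ hε).1 hn]
  have hratio : |(z n).re - x| / exp ((b + ε / 4) * n) ≤ C :=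
    (div_le_iff₀ (exp_pos _)).2 hre_n
  have hlog_n' := abs_le.1 hlog_n
  have hεn : 0 ≤ ε * n := mul_nonneg hε.le hn0
  have hdist := dist_le_of_log_im_le (z := z n) (w := ofReLogIm x (b * n))
    (T := (b + ε / 4) * n) (by linarith) (by rw [ofReLogIm_im, log_exp]; linarith)
  rw [ofReLogIm_re, ofReLogIm_im, log_exp] at hdist
  linarith

end UpperHalfPlane

/-- Kaimanovich's regularity criterion in the hyperbolic plane: if
`log(Im z_n)/n → b` and `dist(z_{n+1}, z_n)/n → 0`, then the sequence `(z_n)` is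
regular with rate `|b|`: `dist(z_n, z_0)/n → |b|` and `z_n` stays sublinearly close
to a geodesic ray travelled at speed `|b|`. -/
theorem regular_sequence_upperHalfPlane (z : ℕ → UpperHalfPlane) (b : ℝ)
    (him : Tendsto (fun n : ℕ => Real.log (z n).im / n) atTop (nhds b))
    (hstep : Tendsto (fun n : ℕ => dist (z (n + 1)) (z n) / n) atTop (nhds 0)) :
    Tendsto (fun n : ℕ => dist (z n) (z 0) / n) atTop (nhds |b|) ∧
    ∃ γ : ℝ → UpperHalfPlane,
      (∀ s t : ℝ, 0 ≤ s → 0 ≤ t → dist (γ s) (γ t) = |s - t|) ∧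
      Tendsto (fun n : ℕ => dist (z n) (γ (|b| * n)) / n) atTop (nhds 0) := by
  have hlog := isLittleO_sub_mul_natCast_iff_tendsto_div.2 him
  obtain ⟨x, hx⟩ := ExpGrowthLE.exists_sub_of_succ_sub (u := fun n => (z n).re)
    (expGrowthLE_re_succ_sub hlog (isLittleO_natCast_iff_tendsto_div.2 hstep))
  obtain ⟨σ, hσ, hσb⟩ : ∃ σ : ℝ, |σ| = 1 ∧ σ * |b| = b := by
    rcases le_or_gt 0 b with hb | hb
    exacts [⟨1, by simp [abs_of_nonneg hb]⟩, ⟨-1, by simp [abs_of_neg hb]⟩]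
  set γ : ℝ → ℍ := fun t => ofReLogIm x (σ * t)
  have hγ : ∀ s t : ℝ, 0 ≤ s → 0 ≤ t → dist (γ s) (γ t) = |s - t| := fun s t _ _ => by
    rw [dist_ofReLogIm_ofReLogIm, ← mul_sub, abs_mul, hσ, one_mul]
  have hdist : (fun n : ℕ => dist (z n) (γ (|b| * n))) =o[atTop] (fun n : ℕ => (n : ℝ)) := by
    simpa only [γ, ← mul_assoc, hσb] using isLittleO_dist_ofReLogIm hlog hx
  refine ⟨?_, γ, hγ, isLittleO_natCast_iff_tendsto_div.1 hdist⟩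
  exact isLittleO_sub_mul_natCast_iff_tendsto_div.1
    (isLittleO_dist_sub_of_geodesic (abs_nonneg b) hγ hdist)
end

section
/- Let (z_n)_{n≥0} be a sequence in ℍ and b < 0 a real number such that log(Im z_n)/n → b and dist(z_{n+1}, z_n)/n → 0 as n → ∞. Then there exists ζ ∈ ℝ such that the complex numbers z_n converge to ζ in ℂ. -/
open Filter UpperHalfPlane

/-- If `log(Im z_n)/n → b < 0` and `dist(z_{n+1}, z_n)/n → 0`, then the regular
sequence `(z_n)` in the hyperbolic plane converges to a point `ζ` of the boundary
line `ℝ = ∂*ℍ`, in the sense that `z_n → ζ` as complex numbers. -/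
theorem regular_sequence_upperHalfPlane_converges_to_boundary
    (z : ℕ → UpperHalfPlane) (b : ℝ) (hb : b < 0)
    (him : Tendsto (fun n : ℕ => Real.log (z n).im / n) atTop (nhds b))
    (hstep : Tendsto (fun n : ℕ => dist (z (n + 1)) (z n) / n) atTop (nhds 0)) :
    ∃ ζ : ℝ, Tendsto (fun n : ℕ => (z n : ℂ)) atTop (nhds (ζ : ℂ)) := by
  -- imaginary parts tend to 0
  have him0 : Tendsto (fun n : ℕ => (z n).im) atTop (nhds 0) := by
    have hlog : Tendsto (fun n : ℕ => Real.log (z n).im) atTop atBot := by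
      have : Tendsto (fun n : ℕ => (Real.log (z n).im / n) * n) atTop atBot := by
        apply Tendsto.neg_mul_atTop hb him
        exact tendsto_natCast_atTop_atTop
      refine this.congr' ?_
      filter_upwards [eventually_gt_atTop 0] with n hn
      field_simp
    have := Real.tendsto_exp_atBot.comp hlog
    refine this.congr fun n => Real.exp_log (z n).im_pos
  -- eventual bounds
  have h1 : ∀ᶠ n : ℕ in atTop, Real.log (z n).im / n < b / 2 :=
    him.eventually_lt_const (by linarith)
  have h2 : ∀ᶠ n : ℕ in atTop, dist (z (n + 1)) (z n) / n < -b / 4 :=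
    hstep.eventually_lt_const (by linarith)
  -- summability of consecutive distances
  have hsum : Summable (fun n : ℕ => dist ((z n : ℂ)) ((z (n + 1) : ℂ))) := by
    apply summable_of_isBigO_nat
      (summable_geometric_of_lt_one (Real.exp_nonneg (b / 4))
        (Real.exp_lt_one_iff.mpr (by linarith)))
    rw [Asymptotics.isBigO_iff]
    refine ⟨1, ?_⟩
    filter_upwards [h1, h2, eventually_gt_atTop 0] with n hn1 hn2 hn0
    have hn0' : (0 : ℝ) < n := by exact_mod_cast hn0
    have himle : (z n).im ≤ Real.exp (b / 2 * n) := by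
      rw [← Real.exp_log (z n).im_pos]
      apply Real.exp_le_exp.mpr
      nlinarith [(div_lt_iff₀ hn0').mp hn1]
    have hdle : dist (z (n + 1)) (z n) ≤ -b / 4 * n :=
      le_of_lt ((div_lt_iff₀ hn0').mp hn2)
    have key : dist ((z (n+1) : ℂ)) ((z n : ℂ)) ≤ (z n).im * (Real.exp (dist (z (n+1)) (z n)) - 1) :=
      UpperHalfPlane.dist_coe_le (z (n+1)) (z n)
    have h3 : (z n).im * (Real.exp (dist (z (n+1)) (z n)) - 1)
        ≤ Real.exp (b / 2 * n) * Real.exp (-b / 4 * n) := by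
      apply mul_le_mul himle ?_ ?_ (Real.exp_nonneg _)
      · have := Real.exp_le_exp.mpr hdle
        linarith
      · have := Real.exp_pos (dist (z (n+1)) (z n))
        have h4 := Real.one_le_exp dist_nonneg (x := dist (z (n+1)) (z n))
        linarith
    have h5 : dist ((z n : ℂ)) ((z (n+1) : ℂ)) ≤ Real.exp ((n : ℝ) * (b / 4)) := by
      rw [dist_comm]
      calc dist ((z (n+1) : ℂ)) ((z n : ℂ)) ≤ _ := key
        _ ≤ _ := h3
        _ = Real.exp ((n : ℝ) * (b / 4)) := by rw [← Real.exp_add]; ring_nf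
    rw [Real.norm_eq_abs, abs_of_nonneg dist_nonneg, Real.norm_eq_abs, one_mul,
      abs_of_nonneg (pow_nonneg (Real.exp_nonneg _) _), ← Real.exp_nat_mul]
    exact h5
  have hcauchy : CauchySeq (fun n : ℕ => (z n : ℂ)) := cauchySeq_of_summable_dist hsum
  obtain ⟨w, hw⟩ := cauchySeq_tendsto_of_complete hcauchy
  have hwim : w.im = 0 := by
    have : Tendsto (fun n : ℕ => ((z n : ℂ)).im) atTop (nhds w.im) :=
      (Complex.continuous_im.tendsto w).comp hw
    exact tendsto_nhds_unique this him0
  refine ⟨w.re, ?_⟩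
  convert hw using 2
  apply Complex.ext <;> simp [hwim]
end

section
/- Almost surely, S_{N_t}/t → E(ξ₁)/E(T₁) as t → ∞. -/
/-!
By the strong law of large numbers, almost surely `S_n / n → E ξ` and `U_n / n → E T > 0`.
The rest is deterministic: `U_n → ∞` forces `N_t → ∞`, and the squeeze
`U_{N_t} ≤ t < U_{N_t + 1}` gives `t / N_t → E T`, so that
`S_{N_t} / t = (S_{N_t} / N_t) · (N_t / t) → E ξ / E T`.
-/

open MeasureTheory ProbabilityTheory Filter Finset Topology

/-- `N_t = max {n | U n ≤ t}`. The `sSup` of an unbounded set of naturals is `0`, so the lemmas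
below assume `U → ∞`. -/
noncomputable def renewalCount (U : ℕ → ℝ) (t : ℝ) : ℕ := sSup {n : ℕ | U n ≤ t}

section renewalCount

variable {S U : ℕ → ℝ} {A B : ℝ}

theorem bddAbove_setOf_apply_le (hU : Tendsto U atTop atTop) (t : ℝ) :
    BddAbove {n : ℕ | U n ≤ t} := by
  obtain ⟨M, hM⟩ := (hU.eventually_gt_atTop t).exists_forall_of_atTop
  exact ⟨M, fun n hn => not_lt.1 fun h => (hM n h.le).not_ge hn⟩

theorem le_renewalCount (hU : Tendsto U atTop atTop) {n : ℕ} {t : ℝ} (h : U n ≤ t) :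
    n ≤ renewalCount U t :=
  le_csSup (bddAbove_setOf_apply_le hU t) h

theorem apply_renewalCount_le (hU : Tendsto U atTop atTop) {t : ℝ} (ht : U 0 ≤ t) :
    U (renewalCount U t) ≤ t :=
  Nat.sSup_mem ⟨0, ht⟩ (bddAbove_setOf_apply_le hU t)

theorem lt_apply_renewalCount_succ (hU : Tendsto U atTop atTop) (t : ℝ) :
    t < U (renewalCount U t + 1) :=
  not_le.1 fun h => (le_renewalCount hU h).not_gt (Nat.lt_succ_self _)

theorem tendsto_renewalCount_atTop (hU : Tendsto U atTop atTop) :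
    Tendsto (renewalCount U) atTop atTop :=
  tendsto_atTop.2 fun n => (eventually_ge_atTop (U n)).mono fun _ => le_renewalCount hU

theorem tendsto_atTop_of_tendsto_div_natCast (hB : 0 < B)
    (hU : Tendsto (fun n : ℕ => U n / n) atTop (𝓝 B)) : Tendsto U atTop atTop := by
  refine (hU.pos_mul_atTop hB tendsto_natCast_atTop_atTop).congr' ?_
  filter_upwards [eventually_ne_atTop 0] with n hn
  field_simp

theorem tendsto_succ_div_natCast (hU : Tendsto (fun n : ℕ => U n / n) atTop (𝓝 B)) :
    Tendsto (fun n : ℕ => U (n + 1) / n) atTop (𝓝 B) := by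
  have hratio : Tendsto (fun n : ℕ => ((n : ℝ) + 1) / n) atTop (𝓝 1) := by
    simpa using (tendsto_natCast_div_add_atTop (1 : ℝ)).inv₀ one_ne_zero
  have hU' := ((tendsto_add_atTop_iff_nat 1).2 hU).mul hratio
  rw [mul_one] at hU'
  refine hU'.congr' ?_
  filter_upwards [eventually_ne_atTop 0] with n hn
  push_cast
  field_simp

theorem tendsto_div_renewalCount (hB : 0 < B)
    (hU : Tendsto (fun n : ℕ => U n / n) atTop (𝓝 B)) :
    Tendsto (fun t => t / renewalCount U t) atTop (𝓝 B) := by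
  have hUtop := tendsto_atTop_of_tendsto_div_natCast hB hU
  have hN := tendsto_renewalCount_atTop hUtop
  refine tendsto_of_tendsto_of_tendsto_of_le_of_le' (hU.comp hN)
    ((tendsto_succ_div_natCast hU).comp hN) ?_ ?_
  · filter_upwards [eventually_ge_atTop (U 0)] with t ht
    exact div_le_div_of_nonneg_right (apply_renewalCount_le hUtop ht) (Nat.cast_nonneg _)
  · exact Eventually.of_forall fun t =>
      div_le_div_of_nonneg_right (lt_apply_renewalCount_succ hUtop t).le (Nat.cast_nonneg _)

theorem tendsto_apply_renewalCount_div (hB : 0 < B)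
    (hS : Tendsto (fun n : ℕ => S n / n) atTop (𝓝 A))
    (hU : Tendsto (fun n : ℕ => U n / n) atTop (𝓝 B)) :
    Tendsto (fun t => S (renewalCount U t) / t) atTop (𝓝 (A / B)) := by
  have hN := tendsto_renewalCount_atTop (tendsto_atTop_of_tendsto_div_natCast hB hU)
  refine ((hS.comp hN).mul ((tendsto_div_renewalCount hB hU).inv₀ hB.ne')).congr' ?_
  filter_upwards [hN.eventually_ne_atTop 0, eventually_ne_atTop 0] with t hNt ht
  simp only [Function.comp_apply]
  field_simp

end renewalCount

theorem integral_pos_of_ae_pos {α : Type*} [MeasurableSpace α] {μ : Measure α} [NeZero μ]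
    {f : α → ℝ} (hf : ∀ᵐ x ∂μ, 0 < f x) (hfi : Integrable f μ) :
    0 < ∫ x, f x ∂μ := by
  rw [integral_pos_iff_support_of_nonneg_ae (hf.mono fun _ hx => hx.le) hfi, pos_iff_ne_zero]
  intro hsupp
  have hzero : ∀ᵐ x ∂μ, f x = 0 := by
    simpa [Function.mem_support] using measure_eq_zero_iff_ae_notMem.1 hsupp
  obtain ⟨x, hpos, hx⟩ := (hf.and hzero).exists
  exact hpos.ne' hx

theorem strong_law_ae_real_comp {Ω β : Type*} [MeasurableSpace Ω] [MeasurableSpace β]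
    {μ : Measure Ω} {X : ℕ → Ω → β} (hindep : iIndepFun X μ)
    (hident : ∀ k, IdentDistrib (X k) (X 0) μ μ) {f : β → ℝ} (hf : Measurable f)
    (hint : Integrable (f ∘ X 0) μ) :
    ∀ᵐ ω ∂μ, Tendsto (fun n : ℕ => (∑ k ∈ range n, f (X k ω)) / n) atTop
      (𝓝 (∫ ω, f (X 0 ω) ∂μ)) :=
  strong_law_ae_real (fun k => f ∘ X k) hint
    (fun _ _ hij => (hindep.comp (fun _ => f) (fun _ => hf)).indepFun hij)
    (fun k => (hident k).comp hf)

theorem renewal_reward_strong_law_general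
    {Ω : Type*} [MeasureSpace Ω] [IsProbabilityMeasure (ℙ : Measure Ω)]
    (ξ T : ℕ → Ω → ℝ)
    (hindep : iIndepFun (fun k ω => (ξ k ω, T k ω)) ℙ)
    (hident : ∀ k,
      IdentDistrib (fun ω => (ξ k ω, T k ω)) (fun ω => (ξ 0 ω, T 0 ω)) ℙ ℙ)
    (hTpos : ∀ᵐ ω ∂ℙ, 0 < T 0 ω)
    (hξint : Integrable (ξ 0) ℙ) (hTint : Integrable (T 0) ℙ) :
    ∀ᵐ ω ∂ℙ, Tendsto
      (fun t : ℝ =>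
        (∑ k ∈ Finset.range (sSup {n : ℕ | ∑ j ∈ Finset.range n, T j ω ≤ t}),
          ξ k ω) / t)
      atTop (nhds ((∫ ω, ξ 0 ω ∂ℙ) / ∫ ω, T 0 ω ∂ℙ)) := by
  filter_upwards [strong_law_ae_real_comp hindep hident measurable_fst hξint,
    strong_law_ae_real_comp hindep hident measurable_snd hTint] with ω hS hU
  exact tendsto_apply_renewalCount_div (integral_pos_of_ae_pos hTpos hTint) hS hU

/-- Renewal-reward strong law of large numbers: for an i.i.d. sequence of pairs
`(ξ_k, T_k)` with `T > 0` a.s., `E|ξ| < ∞`, `E T < ∞`, setting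
`S_n = ξ_0 + ⋯ + ξ_{n-1}`, `U_n = T_0 + ⋯ + T_{n-1}` and
`N_t = max {n : U_n ≤ t}`, almost surely `S_{N_t}/t → E ξ / E T` as `t → ∞`. -/
theorem renewal_reward_strong_law
    {Ω : Type*} [MeasureSpace Ω] [IsProbabilityMeasure (ℙ : Measure Ω)]
    (ξ T : ℕ → Ω → ℝ)
    (hmeas : ∀ k, Measurable fun ω => (ξ k ω, T k ω))
    (hindep : iIndepFun (fun k ω => (ξ k ω, T k ω)) ℙ)
    (hident : ∀ k,
      IdentDistrib (fun ω => (ξ k ω, T k ω)) (fun ω => (ξ 0 ω, T 0 ω)) ℙ ℙ)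
    (hTpos : ∀ᵐ ω ∂ℙ, 0 < T 0 ω)
    (hξint : Integrable (ξ 0) ℙ) (hTint : Integrable (T 0) ℙ) :
    ∀ᵐ ω ∂ℙ, Tendsto
      (fun t : ℝ =>
        (∑ k ∈ Finset.range (sSup {n : ℕ | ∑ j ∈ Finset.range n, T j ω ≤ t}),
          ξ k ω) / t)
      atTop (nhds ((∫ ω, ξ 0 ω ∂ℙ) / ∫ ω, T 0 ω ∂ℙ)) :=
  renewal_reward_strong_law_general ξ T hindep hident hTpos hξint hTint
end
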